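/- If b = p/q ∈ ℚ (with q ∈ ℕ, q ≥ 1), then the system ẋ = x(1-x), ẏ = y(n + b x - y) admits the rational first integral H(x,y) = y^q (1-x)^{nq+p} / F(x,y)^q, where F is the degree-n invariant polynomial with cofactor n - n x - y; i.e., x(1-x)·∂H/∂x + y(n + b x - y)·∂H/∂y = 0 as rational functions. -/

import Mathlib

/-- Pochhammer symbol `(c)_n = c(c+1)⋯(c+n-1)`. -/
noncomputable def poch (c : ℝ) (n : ℕ) : ℝ := ∏ i ∈ Finset.range n, (c + i)

/-- The function `F(x,y) = y (n-1)! Σ_{ν=0}^{n-1} (-1)^{n+ν} (n+b-ν+1)_ν x^ν/ν! + (b+1)_n x^n`. -/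
noncomputable def Fval (n : ℕ) (b : ℝ) (x y : ℝ) : ℝ :=
  y * (Nat.factorial (n - 1) : ℝ) *
      ∑ ν ∈ Finset.range n,
        (-1) ^ (n + ν) * poch ((n : ℝ) + b - ν + 1) ν * x ^ ν / (Nat.factorial ν : ℝ)
    + poch (b + 1) n * x ^ n

/-!
`y`, `1 - x` and `F` are Darboux functions of `X = x(1-x)∂ₓ + y(n+bx-y)∂ᵧ`, i.e. `X f = K f`,
with cofactors `n + bx - y`, `-x` and `n - nx - y`. Cofactors add under products and scale
under powers, so `X H = (q(n+bx-y) - (nq+p)x - q(n-nx-y)) H = (qb - p) x H = 0`.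
For `F` the identity `X F = (n - nx - y) F` comes down to a telescoping sum, since its
coefficients satisfy `(ν+1) a_{ν+1} = -(n+b-ν) a_ν`.
-/

open Finset

/-- `X f = K f` at `(x, y)` for `X = P ∂ₓ + Q ∂ᵧ`, where `P, Q, K` are the values at `(x, y)`. -/
def HasCofactorAt (P Q : ℝ) (f : ℝ → ℝ → ℝ) (K x y : ℝ) : Prop :=
  ∃ fx fy, HasDerivAt (f · y) fx x ∧ HasDerivAt (f x ·) fy y ∧ P * fx + Q * fy = K * f x y

namespace HasCofactorAt

variable {P Q K L x y : ℝ} {f g : ℝ → ℝ → ℝ}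

theorem mul (hf : HasCofactorAt P Q f K x y) (hg : HasCofactorAt P Q g L x y) :
    HasCofactorAt P Q (fun x y => f x y * g x y) (K + L) x y := by
  obtain ⟨fx, fy, hfx, hfy, hf⟩ := hf
  obtain ⟨gx, gy, hgx, hgy, hg⟩ := hg
  exact ⟨_, _, hfx.mul hgx, hfy.mul hgy, by linear_combination g x y * hf + f x y * hg⟩

theorem pow (hf : HasCofactorAt P Q f K x y) (n : ℕ) :
    HasCofactorAt P Q (fun x y => f x y ^ n) (n * K) x y := by
  induction n with
  | zero => exact ⟨0, 0, by simpa using hasDerivAt_const x (1 : ℝ),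
      by simpa using hasDerivAt_const y (1 : ℝ), by simp⟩
  | succ n ih => simpa only [pow_succ, Nat.cast_succ, add_one_mul] using ih.mul hf

theorem inv (hf : HasCofactorAt P Q f K x y) (h : f x y ≠ 0) :
    HasCofactorAt P Q (fun x y => (f x y)⁻¹) (-K) x y := by
  obtain ⟨fx, fy, hfx, hfy, hf⟩ := hf
  refine ⟨_, _, hfx.fun_inv h, hfy.fun_inv h, ?_⟩
  field_simp
  linear_combination -hf

theorem div (hf : HasCofactorAt P Q f K x y) (hg : HasCofactorAt P Q g L x y) (h : g x y ≠ 0) :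
    HasCofactorAt P Q (fun x y => f x y / g x y) (K - L) x y := by
  simpa only [div_eq_mul_inv, sub_eq_add_neg] using hf.mul (hg.inv h)

theorem zpow (hf : HasCofactorAt P Q f K x y) (h : f x y ≠ 0) (m : ℤ) :
    HasCofactorAt P Q (fun x y => f x y ^ m) (m * K) x y := by
  obtain ⟨fx, fy, hfx, hfy, hf⟩ := hf
  have hm := hasDerivAt_zpow m (f x y) (Or.inl h)
  refine ⟨_, _, (hm.comp x hfx :), (hm.comp y hfy :), ?_⟩
  rw [zpow_sub_one₀ h]
  field_simp
  linear_combination (m : ℝ) * hf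

theorem deriv_eq (hf : HasCofactorAt P Q f K x y) :
    P * deriv (f · y) x + Q * deriv (f x ·) y = K * f x y := by
  obtain ⟨fx, fy, hfx, hfy, hf⟩ := hf
  rw [hfx.deriv, hfy.deriv, hf]

end HasCofactorAt

theorem hasCofactorAt_snd (P K x y : ℝ) : HasCofactorAt P (y * K) (fun _ y => y) K x y :=
  ⟨0, 1, hasDerivAt_const x y, hasDerivAt_id y, by ring⟩

theorem hasCofactorAt_one_sub_fst (Q x y : ℝ) :
    HasCofactorAt (x * (1 - x)) Q (fun x _ => 1 - x) (-x) x y :=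
  ⟨-1, 0, by simpa using (hasDerivAt_id x).const_sub 1, hasDerivAt_const y (1 - x), by ring⟩

theorem poch_succ_left (c : ℝ) (k : ℕ) : poch c (k + 1) = c * poch (c + 1) k := by
  simp only [poch, prod_range_succ', Nat.cast_add, Nat.cast_one, Nat.cast_zero, add_zero,
    add_right_comm c, add_assoc, mul_comm]

theorem mul_natCast_mul_pow_sub_one (x : ℝ) (k : ℕ) : x * (k * x ^ (k - 1)) = k * x ^ k := by
  cases k with
  | zero => simp
  | succ k => rw [Nat.add_sub_cancel, pow_succ]; ring

/-- `(-1)^n` times the `ν`-th Taylor coefficient of `(1 - x)^(n + b)`; the sum over `ν < n` thus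
solves `(1 - x) S' = -(n + b) S` up to the degree-`n` remainder of `sum_Fcoeff_ode_remainder`. -/
noncomputable def Fcoeff (n : ℕ) (b : ℝ) (ν : ℕ) : ℝ :=
  (-1) ^ (n + ν) * poch ((n : ℝ) + b - ν + 1) ν / (Nat.factorial ν : ℝ)

theorem Fcoeff_succ (n : ℕ) (b : ℝ) (ν : ℕ) :
    (ν + 1) * Fcoeff n b (ν + 1) = -(((n : ℝ) + b - ν) * Fcoeff n b ν) := by
  have hpoch : poch ((n : ℝ) + b - (ν + 1 : ℕ) + 1) (ν + 1) =
      (n + b - ν) * poch (n + b - ν + 1) ν := by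
    rw [show (n : ℝ) + b - (ν + 1 : ℕ) + 1 = n + b - ν by push_cast; ring, poch_succ_left]
  simp only [Fcoeff, hpoch, Nat.factorial_succ, pow_succ, ← add_assoc]
  push_cast
  field_simp

theorem natCast_mul_factorial_mul_Fcoeff_self {n : ℕ} (hn : 1 ≤ n) (b : ℝ) :
    n * (n - 1).factorial * Fcoeff n b n = poch (b + 1) n := by
  have hfact : (n : ℝ) * (n - 1).factorial = n.factorial := by
    exact_mod_cast Nat.mul_factorial_pred (by omega)
  rw [hfact, Fcoeff, show (n : ℝ) + b - n + 1 = b + 1 by ring, Even.neg_one_pow ⟨n, rfl⟩]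
  field_simp

theorem sum_Fcoeff_ode_remainder (n : ℕ) (b x : ℝ) :
    x * (1 - x) * ∑ ν ∈ range n, Fcoeff n b ν * (ν * x ^ (ν - 1))
      + (n + b) * x * ∑ ν ∈ range n, Fcoeff n b ν * x ^ ν
      = -(n * Fcoeff n b n * x ^ n) := by
  set g : ℕ → ℝ := fun k => k * Fcoeff n b k * x ^ k
  have hterm (ν : ℕ) : x * (1 - x) * (Fcoeff n b ν * (ν * x ^ (ν - 1)))
      + (n + b) * x * (Fcoeff n b ν * x ^ ν) = g ν - g (ν + 1) := by
    simp only [g]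
    push_cast
    linear_combination (1 - x) * Fcoeff n b ν * mul_natCast_mul_pow_sub_one x ν
      + x ^ (ν + 1) * Fcoeff_succ n b ν
  calc _ = ∑ ν ∈ range n, (g ν - g (ν + 1)) := by
        rw [mul_sum, mul_sum, ← sum_add_distrib]
        exact sum_congr rfl fun ν _ => hterm ν
    _ = _ := by rw [sum_range_sub']; simp [g]

theorem Fval_eq (n : ℕ) (b x y : ℝ) :
    Fval n b x y = y * (n - 1).factorial * ∑ ν ∈ range n, Fcoeff n b ν * x ^ ν
      + poch (b + 1) n * x ^ n := by
  simp only [Fval, Fcoeff, div_mul_eq_mul_div]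

theorem hasCofactorAt_Fval {n : ℕ} (hn : 1 ≤ n) (b x y : ℝ) :
    HasCofactorAt (x * (1 - x)) (y * (n + b * x - y)) (Fval n b) (n - n * x - y) x y := by
  set C : ℝ := ((n - 1).factorial : ℝ)
  set A : ℝ := poch (b + 1) n
  set S : ℝ → ℝ := fun t => ∑ ν ∈ range n, Fcoeff n b ν * t ^ ν
  have hS : HasDerivAt S (∑ ν ∈ range n, Fcoeff n b ν * (ν * x ^ (ν - 1))) x :=
    HasDerivAt.fun_sum fun ν _ => (hasDerivAt_pow ν x).const_mul _
  rw [show Fval n b = fun x y => y * C * S x + A * x ^ n from funext₂ (Fval_eq n b)]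
  refine ⟨_, _, (hS.const_mul (y * C)).add ((hasDerivAt_pow n x).const_mul A),
    (((hasDerivAt_id y).mul_const C).mul_const (S x)).add_const (A * x ^ n), ?_⟩
  linear_combination y * C * sum_Fcoeff_ode_remainder n b x
    + A * (1 - x) * mul_natCast_mul_pow_sub_one x n - y * x ^ n * natCast_mul_factorial_mul_Fcoeff_self hn b

/-- If `b = p/q ∈ ℚ` (with `q ≥ 1`), then `H(x,y) = y^q (1-x)^{nq+p} / F(x,y)^q` is a
rational first integral of `ẋ = x(1-x)`, `ẏ = y(n+bx-y)`:
`x(1-x)H_x + y(n+bx-y)H_y = 0` away from the poles. -/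
theorem rational_first_integral (n : ℕ) (hn : 1 ≤ n) (p : ℤ) (q : ℕ) (hq : 1 ≤ q)
    (b : ℝ) (hb : b = (p : ℝ) / (q : ℝ)) (x y : ℝ) (hx : 1 - x ≠ 0)
    (hF : Fval n b x y ≠ 0) :
    x * (1 - x) *
          deriv (fun t => y ^ q * (1 - t) ^ ((n : ℤ) * q + p) / (Fval n b t y) ^ q) x
        + y * ((n : ℝ) + b * x - y) *
          deriv (fun t => t ^ q * (1 - x) ^ ((n : ℤ) * q + p) / (Fval n b x t) ^ q) y
      = 0 := by
  have hH := (((hasCofactorAt_snd _ _ x y).pow q).mul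
    ((hasCofactorAt_one_sub_fst _ x y).zpow hx ((n : ℤ) * q + p))).div
    ((hasCofactorAt_Fval hn b x y).pow q) (pow_ne_zero q hF)
  have hqb : (q : ℝ) * b = p := by
    rw [hb, mul_div_cancel₀ _ (Nat.cast_ne_zero.mpr (by omega))]
  have hK : (q : ℝ) * (n + b * x - y) + (((n : ℤ) * q + p : ℤ) : ℝ) * -x
      - q * (n - n * x - y) = 0 := by
    push_cast; linear_combination x * hqb
  have key := hH.deriv_eq
  beta_reduce at key
  rw [key, hK, zero_mul]
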